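/- arXiv:2108.06431 — 5 statements merged into one kernel-verified Lean document; each statement's English description precedes it below -/
import Mathlib

section
/- Let n ≥ 1, let v : ℝⁿ → ℝⁿ be a continuously differentiable ℤⁿ-periodic vector field, let ρ : ℝⁿ → ℝ be twice continuously differentiable, ℤⁿ-periodic and everywhere strictly positive, let ε > 0, and set J := ρ·v − ε∇ρ. Assume div J(x) = 0 for all x (the stationary Fokker–Planck equation). Then ∫_{[0,1]ⁿ} ⟨v(x), J(x)⟩ dx = ∫_{[0,1]ⁿ} ‖J(x)‖²/ρ(x) dx; in particular ∫_{[0,1]ⁿ} ⟨v(x), J(x)⟩ dx ≥ 0, and this quantity equals 0 if and only if J vanishes identically. -/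
/-!
Since `ε∇ρ = ρv − J`, one has pointwise
`⟨v, J⟩ = ‖J‖²/ρ + ε⟨∇ log ρ, J⟩ = ‖J‖²/ρ + ε div (log ρ · J)`, the last step because `div J = 0`.
The field `log ρ · J` is `ℤⁿ`-periodic, so by the divergence theorem its divergence integrates to
zero over the unit cube: the fluxes through opposite faces cancel. What remains is
`∫ ⟨v, J⟩ = ∫ ‖J‖²/ρ`, whose integrand is continuous and nonnegative; it vanishes only if `J`
vanishes on the cube, hence everywhere by periodicity.
-/

open MeasureTheory Set

section Periodic

variable {n : ℕ} {E : Type*}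

def IsIntPeriodic (f : (Fin n → ℝ) → E) : Prop :=
  ∀ (x : Fin n → ℝ) (k : Fin n → ℤ), f (x + fun i => (k i : ℝ)) = f x

theorem IsIntPeriodic.apply_add_single {f : (Fin n → ℝ) → E} (hf : IsIntPeriodic f)
    (i : Fin n) (x : Fin n → ℝ) : f (x + Pi.single i 1) = f x := by
  convert hf x (Pi.single i 1) using 3
  ext j
  by_cases h : j = i <;> simp [h]

theorem IsIntPeriodic.exists_mem_Icc_eq {f : (Fin n → ℝ) → E} (hf : IsIntPeriodic f)
    (x : Fin n → ℝ) : ∃ y ∈ Icc (0 : Fin n → ℝ) 1, f y = f x := by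
  refine ⟨fun i => Int.fract (x i),
    ⟨fun i => Int.fract_nonneg _, fun i => (Int.fract_lt_one _).le⟩, ?_⟩
  rw [← hf _ fun i => ⌊x i⌋]
  congr 1
  ext i
  exact Int.fract_add_floor (x i)

theorem IsIntPeriodic.fderiv [NormedAddCommGroup E] [NormedSpace ℝ E] {f : (Fin n → ℝ) → E}
    (hf : IsIntPeriodic f) : IsIntPeriodic (fderiv ℝ f) := by
  intro x k
  rw [← fderiv_comp_add_right, funext fun y => hf y k]

end Periodic

theorem Fin.insertNth_one_eq_insertNth_zero_add_single {m : ℕ} (i : Fin (m + 1))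
    (x : Fin m → ℝ) :
    Fin.insertNth (α := fun _ => ℝ) i 1 x =
      Fin.insertNth (α := fun _ => ℝ) i 0 x + Pi.single i 1 := by
  ext j
  induction j using Fin.succAboveCases i <;> simp

section Divergence

variable {n : ℕ}

noncomputable def divergence (F : (Fin n → ℝ) → Fin n → ℝ) (x : Fin n → ℝ) : ℝ :=
  ∑ i, fderiv ℝ F x (Pi.single i 1) i

theorem divergence_smul {g : (Fin n → ℝ) → ℝ} {F : (Fin n → ℝ) → Fin n → ℝ} {x : Fin n → ℝ}
    (hg : DifferentiableAt ℝ g x) (hF : DifferentiableAt ℝ F x) :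
    divergence (fun y => g y • F y) x =
      g x * divergence F x + ∑ i, fderiv ℝ g x (Pi.single i 1) * F x i := by
  simp [divergence, fderiv_fun_smul hg hF, Finset.mul_sum, Finset.sum_add_distrib]

theorem ContDiff.continuous_divergence {F : (Fin n → ℝ) → Fin n → ℝ} (hF : ContDiff ℝ 1 F) :
    Continuous (divergence F) := by
  have := hF.continuous_fderiv one_ne_zero
  unfold divergence
  fun_prop

theorem integral_divergence_Icc_eq_zero_of_periodic {F : (Fin n → ℝ) → Fin n → ℝ}
    (hF : ContDiff ℝ 1 F) (hper : ∀ i x, F (x + Pi.single i 1) = F x) :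
    ∫ x in Icc 0 1, divergence F x = 0 := by
  cases n with
  | zero => simp [divergence]
  | succ m =>
    have hFd : Differentiable ℝ F := hF.differentiable one_ne_zero
    unfold divergence
    rw [integral_divergence_of_hasFDerivAt_off_countable 0 1 zero_le_one F (fderiv ℝ F) ∅
      countable_empty hF.continuous.continuousOn (fun x _ => (hFd x).hasFDerivAt)
      hF.continuous_divergence.integrableOn_Icc]
    refine Finset.sum_eq_zero fun i _ => ?_
    simp [Fin.insertNth_one_eq_insertNth_zero_add_single, hper]

end Divergence

theorem eqOn_zero_of_setIntegral_Icc_eq_zero {ι : Type*} [Fintype ι] {f : (ι → ℝ) → ℝ}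
    (hf : Continuous f) (hf0 : 0 ≤ f) {a b : ι → ℝ} (hab : ∀ i, a i < b i)
    (h : ∫ x in Icc a b, f x = 0) : EqOn f 0 (Icc a b) := by
  have hae : f =ᵐ[volume.restrict (Icc a b)] 0 :=
    (setIntegral_eq_zero_iff_of_nonneg_ae (.of_forall hf0) hf.integrableOn_Icc).mp h
  refine Measure.eqOn_of_ae_eq hae hf.continuousOn continuousOn_const ?_
  rw [← pi_univ_Icc, interior_pi_set finite_univ, closure_pi_set]
  simp [closure_Ioo, fun i => (hab i).ne]

section Current

variable {n : ℕ} (ε : ℝ) (ρ : (Fin n → ℝ) → ℝ) (v : (Fin n → ℝ) → Fin n → ℝ)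

noncomputable def current : (Fin n → ℝ) → Fin n → ℝ :=
  fun x i => ρ x * v x i - ε * fderiv ℝ ρ x (Pi.single i 1)

variable {ε ρ v}

theorem contDiff_current (hρ : ContDiff ℝ 2 ρ) (hv : ContDiff ℝ 1 v) :
    ContDiff ℝ 1 (current ε ρ v) := by
  have hρ' : ContDiff ℝ 1 (fderiv ℝ ρ) := hρ.fderiv_right (m := 1) le_rfl
  exact contDiff_pi.mpr fun i => ((hρ.of_le one_le_two).mul (contDiff_pi.mp hv i)).sub
    (contDiff_const.mul (hρ'.clm_apply contDiff_const))

theorem IsIntPeriodic.current (hρ : IsIntPeriodic ρ) (hv : IsIntPeriodic v) :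
    IsIntPeriodic (current ε ρ v) := by
  intro x k
  ext i
  simp only [_root_.current, hρ x k, hv x k, hρ.fderiv x k]

theorem sum_mul_current_eq {x : Fin n → ℝ} (hρ : DifferentiableAt ℝ ρ x) (hρx : ρ x ≠ 0)
    (hJ : DifferentiableAt ℝ (current ε ρ v) x) (hdiv : divergence (current ε ρ v) x = 0) :
    ∑ i, v x i * current ε ρ v x i = (∑ i, current ε ρ v x i ^ 2) / ρ x +
      ε * divergence (fun y => Real.log (ρ y) • current ε ρ v y) x := by
  rw [divergence_smul (hρ.log hρx) hJ, hdiv, fderiv.log hρ hρx]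
  simp [current, Finset.mul_sum, Finset.sum_div, ← Finset.sum_add_distrib]
  refine Finset.sum_congr rfl fun i _ => ?_
  field_simp
  ring

theorem integral_sum_mul_current_eq (hρ : ContDiff ℝ 2 ρ) (hρper : IsIntPeriodic ρ)
    (hρpos : ∀ x, 0 < ρ x) (hv : ContDiff ℝ 1 v) (hvper : IsIntPeriodic v)
    (hdiv : ∀ x, divergence (current ε ρ v) x = 0) :
    ∫ x in Icc 0 1, ∑ i, v x i * current ε ρ v x i =
      ∫ x in Icc 0 1, (∑ i, current ε ρ v x i ^ 2) / ρ x := by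
  have hρ1 : ContDiff ℝ 1 ρ := hρ.of_le one_le_two
  have hJ : ContDiff ℝ 1 (current ε ρ v) := contDiff_current hρ hv
  have hF : ContDiff ℝ 1 fun x => Real.log (ρ x) • current ε ρ v x :=
    (hρ1.log fun x => (hρpos x).ne').smul hJ
  have hFper (i : Fin n) (x : Fin n → ℝ) :
      Real.log (ρ (x + Pi.single i 1)) • current ε ρ v (x + Pi.single i 1) =
        Real.log (ρ x) • current ε ρ v x := by
    rw [hρper.apply_add_single, (hρper.current hvper).apply_add_single]
  have hq : IntegrableOn (fun x => (∑ i, current ε ρ v x i ^ 2) / ρ x) (Icc 0 1) := by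
    have := hJ.continuous
    exact Continuous.integrableOn_Icc (by fun_prop (disch := exact fun x => (hρpos x).ne'))
  simp_rw [sum_mul_current_eq (hρ1.differentiable one_ne_zero _) (hρpos _).ne'
    (hJ.differentiable one_ne_zero _) (hdiv _)]
  rw [integral_add hq (hF.continuous_divergence.const_mul ε).integrableOn_Icc,
    integral_const_mul, integral_divergence_Icc_eq_zero_of_periodic hF hFper, mul_zero,
    add_zero]

end Current

theorem flux_positivity_general (n : ℕ)
    (v : (Fin n → ℝ) → (Fin n → ℝ)) (hv : ContDiff ℝ 1 v)
    (hvper : ∀ (x : Fin n → ℝ) (k : Fin n → ℤ), v (x + fun i => (k i : ℝ)) = v x)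
    (ρ : (Fin n → ℝ) → ℝ) (hρ : ContDiff ℝ 2 ρ)
    (hρper : ∀ (x : Fin n → ℝ) (k : Fin n → ℤ), ρ (x + fun i => (k i : ℝ)) = ρ x)
    (hρpos : ∀ x : Fin n → ℝ, 0 < ρ x)
    (ε : ℝ)
    (J : (Fin n → ℝ) → (Fin n → ℝ))
    (hJdef : ∀ (x : Fin n → ℝ) (i : Fin n),
      J x i = ρ x * v x i - ε * fderiv ℝ ρ x (Pi.single i 1))
    (hdiv : ∀ x : Fin n → ℝ, ∑ i : Fin n, fderiv ℝ J x (Pi.single i 1) i = 0) :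
    ((∫ x in Set.Icc (0 : Fin n → ℝ) 1, ∑ i : Fin n, v x i * J x i) =
        ∫ x in Set.Icc (0 : Fin n → ℝ) 1, (∑ i : Fin n, (J x i) ^ 2) / ρ x) ∧
    (0 ≤ ∫ x in Set.Icc (0 : Fin n → ℝ) 1, ∑ i : Fin n, v x i * J x i) ∧
    ((∫ x in Set.Icc (0 : Fin n → ℝ) 1, ∑ i : Fin n, v x i * J x i) = 0 ↔
      ∀ x : Fin n → ℝ, J x = 0) := by
  obtain rfl : J = current ε ρ v := funext₂ hJdef
  have hJ : Continuous (current ε ρ v) := (contDiff_current hρ hv).continuous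
  have hq0 : 0 ≤ fun x => (∑ i, current ε ρ v x i ^ 2) / ρ x := fun x =>
    div_nonneg (Finset.sum_nonneg fun i _ => sq_nonneg _) (hρpos x).le
  have key := integral_sum_mul_current_eq hρ hρper hρpos hv hvper hdiv
  refine ⟨key, key ▸ setIntegral_nonneg measurableSet_Icc fun x _ => hq0 x, ?_⟩
  rw [key]
  constructor
  · intro h0 x
    obtain ⟨y, hy, hyx⟩ := (IsIntPeriodic.current (ε := ε) hρper hvper).exists_mem_Icc_eq x
    rw [← hyx]
    have hqy := eqOn_zero_of_setIntegral_Icc_eq_zero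
      (by fun_prop (disch := exact fun x => (hρpos x).ne')) hq0 (fun _ => zero_lt_one) h0 hy
    simpa [funext_iff, (hρpos y).ne', Finset.sum_eq_zero_iff_of_nonneg, sq_nonneg] using hqy
  · intro hJ0
    simp [hJ0]

/-- For the stationary Fokker–Planck current `J = ρ·v − ε∇ρ` with
divergence zero and strictly positive periodic density `ρ`, one has
`∫ ⟨v, J⟩ = ∫ ‖J‖²/ρ ≥ 0`, with equality to `0` iff `J ≡ 0`. -/
theorem flux_positivity (n : ℕ) (hn : 1 ≤ n)
    (v : (Fin n → ℝ) → (Fin n → ℝ)) (hv : ContDiff ℝ 1 v)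
    (hvper : ∀ (x : Fin n → ℝ) (k : Fin n → ℤ), v (x + fun i => (k i : ℝ)) = v x)
    (ρ : (Fin n → ℝ) → ℝ) (hρ : ContDiff ℝ 2 ρ)
    (hρper : ∀ (x : Fin n → ℝ) (k : Fin n → ℤ), ρ (x + fun i => (k i : ℝ)) = ρ x)
    (hρpos : ∀ x : Fin n → ℝ, 0 < ρ x)
    (ε : ℝ) (hε : 0 < ε)
    (J : (Fin n → ℝ) → (Fin n → ℝ))
    (hJdef : ∀ (x : Fin n → ℝ) (i : Fin n),
      J x i = ρ x * v x i - ε * fderiv ℝ ρ x (Pi.single i 1))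
    (hdiv : ∀ x : Fin n → ℝ, ∑ i : Fin n, fderiv ℝ J x (Pi.single i 1) i = 0) :
    ((∫ x in Set.Icc (0 : Fin n → ℝ) 1, ∑ i : Fin n, v x i * J x i) =
        ∫ x in Set.Icc (0 : Fin n → ℝ) 1, (∑ i : Fin n, (J x i) ^ 2) / ρ x) ∧
    (0 ≤ ∫ x in Set.Icc (0 : Fin n → ℝ) 1, ∑ i : Fin n, v x i * J x i) ∧
    ((∫ x in Set.Icc (0 : Fin n → ℝ) 1, ∑ i : Fin n, v x i * J x i) = 0 ↔
      ∀ x : Fin n → ℝ, J x = 0) :=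
  flux_positivity_general n v hv hvper ρ hρ hρper hρpos ε J hJdef hdiv
end

section
/- Let U : ℝᴺ → ℝ be continuously differentiable with gradient ∇U, let T₁ ≤ T₂, and let φ : [T₁,T₂] → ℝᴺ be an admissible path with derivative g. Then (1/4)∫_{T₁}^{T₂} ‖g(t) + ∇U(φ(t))‖² dt ≥ sup_{t∈[T₁,T₂]} U(φ(t)) − U(φ(T₁)); in particular it is ≥ U(φ(T₂)) − U(φ(T₁)). Moreover, equality (1/4)∫_{T₁}^{T₂} ‖g(t) + ∇U(φ(t))‖² dt = U(φ(T₂)) − U(φ(T₁)) holds if and only if g(t) = ∇U(φ(t)) for almost every t ∈ [T₁,T₂], i.e. if and only if φ is a (generalized) integral curve of the gradient ascent field ∇U. (This is the Euclidean gradient case of the paper's lower bound for the action S_v with drift v = −∇U: S_v(φ) ≥ ∫_φ(−v♭), with equality exactly for integral curves of −v.) -/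
/-!
Polarization gives `‖g + ∇U(φ)‖² = ‖g - ∇U(φ)‖² + 4⟪∇U(φ), g⟫`, and by the chain rule
`⟪∇U(φ), g⟫` is a.e. the derivative of `U ∘ φ`. As `φ` is absolutely continuous and `U` is locally
Lipschitz, `U ∘ φ` is absolutely continuous, so the fundamental theorem of calculus turns the
integral of `⟪∇U(φ), g⟫` over `[T₁, t]` into `U(φ t) - U(φ T₁)`. Hence that increment is at most
`¼∫‖g + ∇U(φ)‖²`, and over the whole interval the defect is exactly `¼∫‖g - ∇U(φ)‖²`, which
vanishes iff `g = ∇U(φ)` a.e.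
-/

open MeasureTheory Set RealInnerProductSpace

def IsAdmissiblePath (N : ℕ) (T₁ T₂ : ℝ)
    (φ g : ℝ → EuclideanSpace ℝ (Fin N)) : Prop :=
  Measurable g ∧
  MeasureTheory.IntegrableOn (fun t => ‖g t‖ ^ 2) (Set.Icc T₁ T₂) ∧
  ∀ t ∈ Set.Icc T₁ T₂, φ t = φ T₁ + ∫ s in T₁..t, g s

namespace AbsolutelyContinuousOnInterval

variable {X Y : Type*} [PseudoMetricSpace X] [PseudoMetricSpace Y] {a b : ℝ}

theorem of_dist_le_mul {f : ℝ → X} {G : ℝ → Y} (hG : AbsolutelyContinuousOnInterval G a b)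
    {K : ℝ} (hK : 0 ≤ K)
    (hfG : ∀ x ∈ uIcc a b, ∀ y ∈ uIcc a b, dist (f x) (f y) ≤ K * dist (G x) (G y)) :
    AbsolutelyContinuousOnInterval f a b := by
  rw [absolutelyContinuousOnInterval_iff] at hG ⊢
  intro ε hε
  obtain ⟨δ, hδ, hGδ⟩ := hG (ε / (K + 1)) (by positivity)
  refine ⟨δ, hδ, fun E hE hEδ => ?_⟩
  calc ∑ i ∈ Finset.range E.1, dist (f (E.2 i).1) (f (E.2 i).2)
      ≤ K * ∑ i ∈ Finset.range E.1, dist (G (E.2 i).1) (G (E.2 i).2) := by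
        rw [Finset.mul_sum]
        exact Finset.sum_le_sum fun i hi => hfG _ (hE.1 i hi).1 _ (hE.1 i hi).2
    _ ≤ K * (ε / (K + 1)) := by gcongr; exact (hGδ E hE hEδ).le
    _ < ε := by rw [mul_div_assoc']; exact (div_lt_iff₀ (by positivity)).2 (by nlinarith)

end AbsolutelyContinuousOnInterval

theorem LipschitzOnWith.comp_absolutelyContinuousOnInterval {X Y : Type*}
    [PseudoMetricSpace X] [PseudoMetricSpace Y] {f : X → Y} {K : NNReal} {s : Set X}
    {γ : ℝ → X} {a b : ℝ} (hf : LipschitzOnWith K f s)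
    (hγ : AbsolutelyContinuousOnInterval γ a b) (hγs : MapsTo γ (uIcc a b) s) :
    AbsolutelyContinuousOnInterval (f ∘ γ) a b :=
  hγ.of_dist_le_mul K.2 fun _ hx _ hy => hf.dist_le_mul _ (hγs hx) _ (hγs hy)

theorem IntervalIntegrable.absolutelyContinuousOnInterval_primitive {E : Type*}
    [NormedAddCommGroup E] [NormedSpace ℝ E] {g : ℝ → E} {a b c : ℝ}
    (hg : IntervalIntegrable g volume a b) (hc : c ∈ uIcc a b) :
    AbsolutelyContinuousOnInterval (fun x => ∫ s in c..x, g s) a b := by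
  refine (hg.norm.absolutelyContinuousOnInterval_intervalIntegral hc).of_dist_le_mul zero_le_one
    fun x hx y hy => ?_
  have hcx := hg.mono_set (uIcc_subset_uIcc hc hx)
  have hcy := hg.mono_set (uIcc_subset_uIcc hc hy)
  rw [one_mul, dist_eq_norm, dist_eq_norm, intervalIntegral.integral_interval_sub_left hcx hcy,
    intervalIntegral.integral_interval_sub_left hcx.norm hcy.norm, Real.norm_eq_abs]
  exact intervalIntegral.norm_integral_le_abs_integral_norm

theorem MeasureTheory.MemLp.integrable_norm_sq {α F : Type*} [MeasurableSpace α] {μ : Measure α}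
    [NormedAddCommGroup F] {f : α → F} (hf : MemLp f 2 μ) : Integrable (fun x => ‖f x‖ ^ 2) μ :=
  (memLp_two_iff_integrable_sq_norm hf.1).1 hf

theorem integral_norm_sub_sq_eq_zero_iff {α F : Type*} [MeasurableSpace α] {μ : Measure α}
    [NormedAddCommGroup F] {f w : α → F} (hf : MemLp f 2 μ) (hw : MemLp w 2 μ) :
    ∫ x, ‖f x - w x‖ ^ 2 ∂μ = 0 ↔ ∀ᵐ x ∂μ, f x = w x := by
  have hsub : Integrable (fun x => ‖f x - w x‖ ^ 2) μ := (hf.sub hw).integrable_norm_sq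
  rw [integral_eq_zero_iff_of_nonneg (fun x => sq_nonneg _) hsub]
  refine Filter.eventually_congr (Filter.Eventually.of_forall fun x => ?_)
  simp [sub_eq_zero]

section InnerProductSpace

variable {E : Type*} [NormedAddCommGroup E] [InnerProductSpace ℝ E]

section SquareIntegrable

variable {α : Type*} [MeasurableSpace α] {μ : Measure α} {f w : α → E}

theorem integral_norm_add_sq_eq (hf : MemLp f 2 μ) (hw : MemLp w 2 μ) :
    ∫ x, ‖f x + w x‖ ^ 2 ∂μ = ∫ x, ‖f x - w x‖ ^ 2 ∂μ + 4 * ∫ x, ⟪w x, f x⟫ ∂μ := by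
  have hpolar : ∀ x, ⟪w x, f x⟫ = (‖f x + w x‖ ^ 2 - ‖f x - w x‖ ^ 2) / 4 := fun x => by
    rw [norm_add_sq_real, norm_sub_sq_real, real_inner_comm]
    ring
  have hadd : Integrable (fun x => ‖f x + w x‖ ^ 2) μ := (hf.add hw).integrable_norm_sq
  have hsub : Integrable (fun x => ‖f x - w x‖ ^ 2) μ := (hf.sub hw).integrable_norm_sq
  simp only [hpolar]
  rw [integral_div, integral_sub hadd hsub]
  ring

theorem integral_inner_le_integral_norm_add_sq (hf : MemLp f 2 μ) (hw : MemLp w 2 μ) :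
    ∫ x, ⟪w x, f x⟫ ∂μ ≤ 1 / 4 * ∫ x, ‖f x + w x‖ ^ 2 ∂μ := by
  have : 0 ≤ ∫ x, ‖f x - w x‖ ^ 2 ∂μ := integral_nonneg fun x => sq_nonneg _
  rw [integral_norm_add_sq_eq hf hw]
  linarith

end SquareIntegrable

variable [CompleteSpace E]

theorem ContDiff.continuous_gradient {U : E → ℝ} (hU : ContDiff ℝ 1 U) :
    Continuous (gradient U) :=
  (InnerProductSpace.toDual ℝ E).symm.continuous.comp (hU.continuous_fderiv one_ne_zero)

theorem ContDiff.sub_eq_integral_inner_gradient {U : E → ℝ} (hU : ContDiff ℝ 1 U) {g : ℝ → E}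
    {a b : ℝ} (hg : IntervalIntegrable g volume a b) (x₀ : E) :
    U (x₀ + ∫ s in a..b, g s) - U x₀ =
      ∫ t in a..b, ⟪gradient U (x₀ + ∫ s in a..t, g s), g t⟫ := by
  let γ : ℝ → E := fun t => x₀ + ∫ s in a..t, g s
  suffices (U ∘ γ) b - (U ∘ γ) a = ∫ t in a..b, ⟪gradient U (γ t), g t⟫ by simpa [γ] using this
  have hγ : AbsolutelyContinuousOnInterval γ a b :=
    (hg.absolutelyContinuousOnInterval_primitive left_mem_uIcc).of_dist_le_mul zero_le_one
      fun x _ y _ => by simp [γ]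
  obtain ⟨K, hK⟩ := (hU.locallyLipschitz.locallyLipschitzOn).exists_lipschitzOnWith_of_compact
    (isCompact_uIcc.image_of_continuousOn hγ.continuousOn)
  have hUγ := hK.comp_absolutelyContinuousOnInterval hγ (mapsTo_image _ _)
  rw [← hUγ.integral_deriv_eq_sub]
  refine intervalIntegral.integral_congr_ae ?_
  filter_upwards [hg.ae_hasDerivAt_integral] with t ht htab
  have hγt : HasDerivAt γ (g t) t :=
    (ht (uIoc_subset_uIcc htab) a left_mem_uIcc).const_add x₀
  rw [inner_gradient_left]
  exact ((hU.differentiable one_ne_zero (γ t)).hasFDerivAt.comp_hasDerivAt t hγt).deriv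

end InnerProductSpace

namespace IsAdmissiblePath

variable {N : ℕ} {T₁ T₂ : ℝ} {φ g : ℝ → EuclideanSpace ℝ (Fin N)}

theorem memLp_two (hφ : IsAdmissiblePath N T₁ T₂ φ g) :
    MemLp g 2 (volume.restrict (Icc T₁ T₂)) :=
  (memLp_two_iff_integrable_sq_norm hφ.1.aestronglyMeasurable).2 hφ.2.1

theorem intervalIntegrable (hφ : IsAdmissiblePath N T₁ T₂ φ g) (hT : T₁ ≤ T₂) :
    IntervalIntegrable g volume T₁ T₂ :=
  (intervalIntegrable_iff_integrableOn_Icc_of_le hT).2 (hφ.memLp_two.integrable one_le_two)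

theorem continuousOn (hφ : IsAdmissiblePath N T₁ T₂ φ g) (hT : T₁ ≤ T₂) :
    ContinuousOn φ (Icc T₁ T₂) := by
  have hprim := ((hφ.intervalIntegrable hT).absolutelyContinuousOnInterval_primitive
    left_mem_uIcc).continuousOn
  rw [uIcc_of_le hT] at hprim
  exact (continuousOn_const.add hprim).congr hφ.2.2

theorem memLp_gradient_comp (hφ : IsAdmissiblePath N T₁ T₂ φ g) (hT : T₁ ≤ T₂)
    {U : EuclideanSpace ℝ (Fin N) → ℝ} (hU : ContDiff ℝ 1 U) :
    MemLp (fun t => gradient U (φ t)) 2 (volume.restrict (Icc T₁ T₂)) := by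
  have hcont := hU.continuous_gradient.comp_continuousOn (hφ.continuousOn hT)
  obtain ⟨C, hC⟩ := isCompact_Icc.exists_bound_of_continuousOn hcont
  exact .of_bound (hcont.aestronglyMeasurable measurableSet_Icc) C
    ((ae_restrict_iff' measurableSet_Icc).2 (.of_forall hC))

theorem sub_eq_integral_inner_gradient (hφ : IsAdmissiblePath N T₁ T₂ φ g) (hT : T₁ ≤ T₂)
    {U : EuclideanSpace ℝ (Fin N) → ℝ} (hU : ContDiff ℝ 1 U) {t : ℝ} (ht : t ∈ Icc T₁ T₂) :
    U (φ t) - U (φ T₁) = ∫ s in T₁..t, ⟪gradient U (φ s), g s⟫ := by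
  have hsub : uIcc T₁ t ⊆ Icc T₁ T₂ := by
    rw [uIcc_of_le ht.1]; exact Icc_subset_Icc_right ht.2
  have hgt : IntervalIntegrable g volume T₁ t :=
    (hφ.intervalIntegrable hT).mono_set (by rwa [uIcc_of_le hT])
  rw [hφ.2.2 t ht, hU.sub_eq_integral_inner_gradient hgt]
  refine intervalIntegral.integral_congr fun s hs => ?_
  simp only [hφ.2.2 s (hsub hs)]

end IsAdmissiblePath

theorem action_gradient_lower_bound_general (N : ℕ)
    (U : EuclideanSpace ℝ (Fin N) → ℝ) (hU : ContDiff ℝ 1 U)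
    (T₁ T₂ : ℝ) (hT : T₁ ≤ T₂)
    (φ g : ℝ → EuclideanSpace ℝ (Fin N))
    (hφ : IsAdmissiblePath N T₁ T₂ φ g) :
    (∀ t ∈ Icc T₁ T₂,
      U (φ t) - U (φ T₁) ≤
        (1 / 4) * ∫ s in Icc T₁ T₂, ‖g s + gradient U (φ s)‖ ^ 2) ∧
    (U (φ T₂) - U (φ T₁) ≤
      (1 / 4) * ∫ s in Icc T₁ T₂, ‖g s + gradient U (φ s)‖ ^ 2) ∧
    ((1 / 4) * (∫ s in Icc T₁ T₂, ‖g s + gradient U (φ s)‖ ^ 2) =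
        U (φ T₂) - U (φ T₁) ↔
      ∀ᵐ t ∂(volume.restrict (Icc T₁ T₂)), g t = gradient U (φ t)) := by
  have hg := hφ.memLp_two
  have hv := hφ.memLp_gradient_comp hT hU
  have hbound : ∀ t ∈ Icc T₁ T₂, U (φ t) - U (φ T₁) ≤
      (1 / 4) * ∫ s in Icc T₁ T₂, ‖g s + gradient U (φ s)‖ ^ 2 := by
    intro t ht
    have hle : volume.restrict (Ioc T₁ t) ≤ volume.restrict (Icc T₁ T₂) :=
      Measure.restrict_mono (Ioc_subset_Icc_self.trans (Icc_subset_Icc_right ht.2)) le_rfl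
    rw [hφ.sub_eq_integral_inner_gradient hT hU ht, intervalIntegral.integral_of_le ht.1]
    grw [integral_inner_le_integral_norm_add_sq (hg.mono_measure hle) (hv.mono_measure hle)]
    gcongr
    · exact .of_forall fun _ => by positivity
    · exact (hg.add hv).integrable_norm_sq
  have htotal : ∫ s in Icc T₁ T₂, ⟪gradient U (φ s), g s⟫ = U (φ T₂) - U (φ T₁) := by
    rw [hφ.sub_eq_integral_inner_gradient hT hU ⟨hT, le_rfl⟩, intervalIntegral.integral_of_le hT,
      integral_Icc_eq_integral_Ioc]
  refine ⟨hbound, hbound T₂ ⟨hT, le_rfl⟩, ?_⟩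
  rw [integral_norm_add_sq_eq hg hv, htotal, ← integral_norm_sub_sq_eq_zero_iff hg hv]
  constructor <;> intro h <;> linarith

/-- Lower bound for the Freidlin–Wentzell action with gradient drift
`v = −∇U`: `(1/4)∫‖g + ∇U(φ)‖² ≥ sup_t U(φ(t)) − U(φ(T₁)) ≥ U(φ(T₂)) − U(φ(T₁))`, with
equality to `U(φ(T₂)) − U(φ(T₁))` iff `g = ∇U∘φ` almost everywhere on `[T₁,T₂]`, i.e. iff
`φ` is a generalized integral curve of the gradient ascent field `∇U`. -/
theorem action_gradient_lower_bound (N : ℕ) (hN : 1 ≤ N)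
    (U : EuclideanSpace ℝ (Fin N) → ℝ) (hU : ContDiff ℝ 1 U)
    (T₁ T₂ : ℝ) (hT : T₁ ≤ T₂)
    (φ g : ℝ → EuclideanSpace ℝ (Fin N))
    (hφ : IsAdmissiblePath N T₁ T₂ φ g) :
    (∀ t ∈ Icc T₁ T₂,
      U (φ t) - U (φ T₁) ≤
        (1 / 4) * ∫ s in Icc T₁ T₂, ‖g s + gradient U (φ s)‖ ^ 2) ∧
    (U (φ T₂) - U (φ T₁) ≤
      (1 / 4) * ∫ s in Icc T₁ T₂, ‖g s + gradient U (φ s)‖ ^ 2) ∧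
    ((1 / 4) * (∫ s in Icc T₁ T₂, ‖g s + gradient U (φ s)‖ ^ 2) =
        U (φ T₂) - U (φ T₁) ↔
      ∀ᵐ t ∂(volume.restrict (Icc T₁ T₂)), g t = gradient U (φ t)) :=
  action_gradient_lower_bound_general N U hU T₁ T₂ hT φ g hφ
end

section
/- Let τ > 0 and let U : ℝ → ℝ be continuous with c := U(0) − U(τ) > 0. For ε > 0 define D(ε) := ∫₀^τ ∫_x^{x+τ} exp((U(y) − U(x))/ε) dy dx and F(ε) := τ·ε·(1 − exp(−c/ε)) / D(ε). Then lim_{ε→0⁺} ( −ε · log F(ε) ) = max { U(y) − U(x) : 0 ≤ x ≤ τ, x ≤ y ≤ x + τ }. (Small-noise large-deviation asymptotics, via Laplace's method, of the explicit one-dimensional steady-state flux formula for diffusion in a tilted periodic potential on the circle.) -/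
/-!
After the shear `y = x + t`, the denominator `D(ε)` is the Laplace-type integral of
`exp (φ / ε)` over the square `[0, τ]²`, where `φ (x, t) = U (x + t) - U x` has the same range
there as `U y - U x` on the original region. With `M` the maximum of `φ`, we have
`D(ε) ≤ τ² e^{M/ε}`, while the part of the square where `φ > M - δ` is relatively open and
nonempty, hence of positive area `b_δ`, so `D(ε) ≥ b_δ e^{(M-δ)/ε}`; together these give
`ε log D(ε) → M`. The numerator `τ ε (1 - e^{-c/ε})` contributes only terms `ε log (·) → 0`.
-/

open Filter Topology Real Set MeasureTheory

lemma mul_log_mul_exp_div {b : ℝ} (hb : 0 < b) (a : ℝ) {ε : ℝ} (hε : ε ≠ 0) :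
    ε * log (b * exp (a / ε)) = ε * log b + a := by
  rw [log_mul hb.ne' (exp_ne_zero _), log_exp, mul_add, mul_div_cancel₀ _ hε]

lemma tendsto_mul_const_add_nhdsGT_zero (c a : ℝ) :
    Tendsto (fun ε : ℝ => ε * c + a) (𝓝[>] 0) (𝓝 a) :=
  ((continuous_mul_const c).add continuous_const).tendsto' 0 a (by simp)
    |>.mono_left nhdsWithin_le_nhds

theorem tendsto_mul_log_of_exp_bounds {D : ℝ → ℝ} {A M : ℝ}
    (hupper : ∀ ε > 0, D ε ≤ A * exp (M / ε))
    (hlower : ∀ δ > 0, ∃ b > 0, ∀ ε > 0, b * exp ((M - δ) / ε) ≤ D ε) :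
    Tendsto (fun ε => ε * log (D ε)) (𝓝[>] 0) (𝓝 M) := by
  have hDpos : ∀ ε > 0, 0 < D ε := by
    obtain ⟨b, hb, hbD⟩ := hlower 1 one_pos
    exact fun ε hε => (mul_pos hb (exp_pos _)).trans_le (hbD ε hε)
  have hA : 0 < A := pos_of_mul_pos_left ((hDpos 1 one_pos).trans_le (hupper 1 one_pos))
    (exp_pos _).le
  refine tendsto_order.2 ⟨fun a ha => ?_, fun a ha => ?_⟩
  · obtain ⟨b, hb, hbD⟩ := hlower ((M - a) / 2) (by linarith)
    have hlim := tendsto_mul_const_add_nhdsGT_zero (log b) (M - (M - a) / 2)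
    filter_upwards [hlim.eventually (lt_mem_nhds (show a < M - (M - a) / 2 by linarith)),
      self_mem_nhdsWithin] with ε haε hε
    calc a < ε * log b + (M - (M - a) / 2) := haε
      _ = ε * log (b * exp ((M - (M - a) / 2) / ε)) := (mul_log_mul_exp_div hb _ hε.ne').symm
      _ ≤ ε * log (D ε) :=
        mul_le_mul_of_nonneg_left (log_le_log (by positivity) (hbD ε hε)) hε.le
  · have hlim := tendsto_mul_const_add_nhdsGT_zero (log A) M
    filter_upwards [hlim.eventually (gt_mem_nhds ha), self_mem_nhdsWithin] with ε haε hε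
    calc ε * log (D ε) ≤ ε * log (A * exp (M / ε)) :=
          mul_le_mul_of_nonneg_left (log_le_log (hDpos ε hε) (hupper ε hε)) hε.le
      _ = ε * log A + M := mul_log_mul_exp_div hA M hε.ne'
      _ < a := haε

theorem tendsto_mul_log_setIntegral_exp_div {X : Type*} [TopologicalSpace X] [T2Space X]
    [MeasurableSpace X] [OpensMeasurableSpace X] {μ : Measure X} [IsFiniteMeasureOnCompacts μ]
    {K : Set X} (hK : IsCompact K) (hK₀ : K.Nonempty)
    (hμK : ∀ u, IsOpen u → (u ∩ K).Nonempty → 0 < μ (u ∩ K))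
    {g : X → ℝ} (hg : ContinuousOn g K) :
    Tendsto (fun ε => ε * log (∫ x in K, exp (g x / ε) ∂μ)) (𝓝[>] 0)
      (𝓝 (sSup (g '' K))) := by
  obtain ⟨x₀, hx₀, hsup, hle⟩ := hK.exists_sSup_image_eq_and_ge hK₀ hg
  have hint : ∀ ε, IntegrableOn (fun x => exp (g x / ε)) K μ := fun ε =>
    (continuous_exp.comp_continuousOn (hg.div_const ε)).integrableOn_compact hK
  rw [hsup]
  refine tendsto_mul_log_of_exp_bounds (A := μ.real K) (fun ε hε => ?_) (fun δ hδ => ?_)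
  · calc ∫ x in K, exp (g x / ε) ∂μ ≤ ∫ x in K, exp (g x₀ / ε) ∂μ :=
          setIntegral_mono_on (hint ε) (integrableOn_const hK.measure_lt_top.ne)
            hK.measurableSet fun x hx => by gcongr; exact hle x hx
      _ = μ.real K * exp (g x₀ / ε) := by rw [setIntegral_const, smul_eq_mul]
  · obtain ⟨u, hu, hug⟩ := continuousOn_iff'.1 hg (Ioi (g x₀ - δ)) isOpen_Ioi
    have hsub : u ∩ K ⊆ K := inter_subset_right
    have hfin : μ (u ∩ K) ≠ ⊤ := (measure_mono hsub).trans_lt hK.measure_lt_top |>.ne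
    have hpos : 0 < μ (u ∩ K) := hμK u hu (hug ▸ ⟨x₀, by simp [hδ], hx₀⟩)
    refine ⟨μ.real (u ∩ K), ENNReal.toReal_pos hpos.ne' hfin, fun ε hε => ?_⟩
    calc μ.real (u ∩ K) * exp ((g x₀ - δ) / ε) ≤ ∫ x in u ∩ K, exp (g x / ε) ∂μ :=
          setIntegral_ge_of_const_le (hu.measurableSet.inter hK.measurableSet) hfin
            (fun x hx => by
              rw [← hug] at hx
              gcongr; exact hx.1.le)
            ((hint ε).mono_set hsub)
      _ ≤ ∫ x in K, exp (g x / ε) ∂μ :=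
          setIntegral_mono_set (hint ε) (ae_of_all _ fun x => (exp_pos _).le)
            hsub.eventuallyLE

lemma measure_inter_pos_of_subset_closure_interior {X : Type*} [TopologicalSpace X]
    [MeasurableSpace X] {μ : Measure X} [μ.IsOpenPosMeasure] {K u : Set X}
    (hK : K ⊆ closure (interior K)) (hu : IsOpen u) (huK : (u ∩ K).Nonempty) :
    0 < μ (u ∩ K) := by
  obtain ⟨x, hxu, hxK⟩ := huK
  exact (hu.inter isOpen_interior).measure_pos μ (mem_closure_iff.1 (hK hxK) u hu hxu)
    |>.trans_le (measure_mono (inter_subset_inter_right _ interior_subset))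

lemma intervalIntegral_intervalIntegral_eq_setIntegral_prod {f : ℝ × ℝ → ℝ} {a b c d : ℝ}
    (hab : a ≤ b) (hcd : c ≤ d) (hf : IntegrableOn f (Icc a b ×ˢ Icc c d)) :
    ∫ x in a..b, ∫ y in c..d, f (x, y) = ∫ p in Icc a b ×ˢ Icc c d, f p := by
  rw [Measure.volume_eq_prod, setIntegral_prod f hf]
  simp only [intervalIntegral.integral_of_le hab, intervalIntegral.integral_of_le hcd,
    integral_Icc_eq_integral_Ioc]

lemma one_sub_exp_neg_div_pos {c ε : ℝ} (hc : 0 < c) (hε : 0 < ε) : 0 < 1 - exp (-c / ε) :=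
  sub_pos.2 (exp_lt_one_iff.2 (div_neg_of_neg_of_pos (neg_neg_of_pos hc) hε))

lemma tendsto_mul_log_flux_numerator {τ c : ℝ} (hτ : 0 < τ) (hc : 0 < c) :
    Tendsto (fun ε => ε * log (τ * ε * (1 - exp (-c / ε)))) (𝓝[>] 0) (𝓝 0) := by
  have hexp : Tendsto (fun ε => exp (-c / ε)) (𝓝[>] 0) (𝓝 0) := by
    refine tendsto_exp_atBot.comp <| (tendsto_neg_atTop_atBot.comp
      (tendsto_inv_nhdsGT_zero.const_mul_atTop hc)).congr fun ε => ?_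
    simp [div_eq_mul_inv]
  have hlog : Tendsto (fun ε => log (1 - exp (-c / ε))) (𝓝[>] 0) (𝓝 0) := by
    have h1 : Tendsto (fun ε => 1 - exp (-c / ε)) (𝓝[>] 0) (𝓝 1) := by
      simpa using tendsto_const_nhds.sub hexp
    simpa using h1.log one_ne_zero
  have hid : Tendsto id (𝓝[>] (0:ℝ)) (𝓝 0) := nhdsWithin_le_nhds
  have hsum := ((hid.mul_const (log τ)).add
    ((continuous_mul_log.tendsto 0).mono_left nhdsWithin_le_nhds)).add (hid.mul hlog)
  simp only [id, zero_mul, mul_zero, add_zero] at hsum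
  refine hsum.congr' ?_
  filter_upwards [self_mem_nhdsWithin] with ε (hε : 0 < ε)
  rw [log_mul (mul_pos hτ hε).ne' (one_sub_exp_neg_div_pos hc hε).ne', log_mul hτ.ne' hε.ne']
  ring

lemma flux_region_eq_image_shear (τ : ℝ) :
    {p : ℝ × ℝ | 0 ≤ p.1 ∧ p.1 ≤ τ ∧ p.1 ≤ p.2 ∧ p.2 ≤ p.1 + τ}
      = (fun p : ℝ × ℝ => (p.1, p.1 + p.2)) '' (Icc 0 τ ×ˢ Icc 0 τ) := by
  ext ⟨x, y⟩
  constructor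
  · rintro ⟨hx₀, hxτ, hxy, hyτ⟩
    exact ⟨(x, y - x), ⟨⟨hx₀, hxτ⟩, by linarith, by linarith⟩, by simp⟩
  · rintro ⟨⟨x, t⟩, ⟨⟨hx₀, hxτ⟩, ht₀, htτ⟩, h⟩
    obtain ⟨rfl, rfl⟩ := Prod.mk.inj h
    exact ⟨hx₀, hxτ, by simpa using ht₀, by simpa using htτ⟩

lemma integral_flux_region_eq_setIntegral_square {U : ℝ → ℝ} (hU : Continuous U) {τ : ℝ}
    (hτ : 0 ≤ τ) (ε : ℝ) :
    ∫ x in (0 : ℝ)..τ, ∫ y in x..(x + τ), exp ((U y - U x) / ε)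
      = ∫ p in Icc 0 τ ×ˢ Icc 0 τ, exp ((U (p.1 + p.2) - U p.1) / ε) := by
  have hshift : ∀ x, ∫ y in x..(x + τ), exp ((U y - U x) / ε)
      = ∫ t in (0 : ℝ)..τ, exp ((U (x + t) - U x) / ε) := fun x => by
    rw [intervalIntegral.integral_comp_add_left (fun y => exp ((U y - U x) / ε)), add_zero]
  have hf : Continuous fun p : ℝ × ℝ => exp ((U (p.1 + p.2) - U p.1) / ε) := by fun_prop
  simp only [hshift]
  exact intervalIntegral_intervalIntegral_eq_setIntegral_prod hτ hτ
    (hf.continuousOn.integrableOn_compact (isCompact_Icc.prod isCompact_Icc))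

/-- Small-noise large-deviation asymptotics (Laplace's method) of the
explicit one-dimensional steady-state flux formula for diffusion in a tilted periodic
potential: `−ε·log F(ε) → max { U(y) − U(x) : 0 ≤ x ≤ τ, x ≤ y ≤ x + τ }` as `ε → 0⁺`,
where `F(ε) = τ·ε·(1 − e^{−c/ε}) / ∫₀^τ ∫_x^{x+τ} e^{(U(y)−U(x))/ε} dy dx` and
`c = U(0) − U(τ) > 0`. -/
theorem one_dimensional_flux_asymptotics (τ : ℝ) (hτ : 0 < τ)
    (U : ℝ → ℝ) (hU : Continuous U) (hc : 0 < U 0 - U τ) :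
    Filter.Tendsto
      (fun ε : ℝ =>
        -ε * Real.log (τ * ε * (1 - Real.exp (-(U 0 - U τ) / ε)) /
          ∫ x in (0 : ℝ)..τ, ∫ y in x..(x + τ), Real.exp ((U y - U x) / ε)))
      (nhdsWithin 0 (Set.Ioi 0))
      (nhds (sSup ((fun p : ℝ × ℝ => U p.2 - U p.1) ''
        {p : ℝ × ℝ | 0 ≤ p.1 ∧ p.1 ≤ τ ∧ p.1 ≤ p.2 ∧ p.2 ≤ p.1 + τ}))) := by
  set S := Icc (0 : ℝ) τ ×ˢ Icc (0 : ℝ) τ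
  have hS : IsCompact S := isCompact_Icc.prod isCompact_Icc
  have hS₀ : S.Nonempty := ⟨(0, 0), ⟨le_rfl, hτ.le⟩, le_rfl, hτ.le⟩
  have hS_pos : ∀ u, IsOpen u → (u ∩ S).Nonempty → 0 < volume (u ∩ S) := by
    refine fun u hu huS => measure_inter_pos_of_subset_closure_interior ?_ hu huS
    rw [interior_prod_eq, interior_Icc, closure_prod_eq, closure_Ioo hτ.ne]
  have hφ : Continuous fun p : ℝ × ℝ => U (p.1 + p.2) - U p.1 := by fun_prop
  have hD := tendsto_mul_log_setIntegral_exp_div hS hS₀ hS_pos hφ.continuousOn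
  have hN := tendsto_mul_log_flux_numerator hτ hc
  simp only [integral_flux_region_eq_setIntegral_square hU hτ.le, flux_region_eq_image_shear,
    image_image]
  have hlim := hD.sub hN
  rw [sub_zero] at hlim
  refine hlim.congr' ?_
  filter_upwards [self_mem_nhdsWithin] with ε (hε : 0 < ε)
  have : NeZero (volume.restrict S) :=
    ⟨by simpa [Measure.restrict_eq_zero] using (hS_pos univ isOpen_univ (by simpa)).ne'⟩
  have hD_pos : 0 < ∫ p in S, exp ((U (p.1 + p.2) - U p.1) / ε) :=
    integral_exp_pos ((hφ.div_const ε).rexp.continuousOn.integrableOn_compact hS)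
  rw [log_div (mul_pos (mul_pos hτ hε) (one_sub_exp_neg_div_pos hc hε)).ne' hD_pos.ne']
  ring
end

section
/- Let C ≥ 0 and let u : ℝᴺ → ℝᴺ be a continuous vector field with ‖u(z)‖ ≤ C for all z ∈ ℝᴺ. Set L := (1 + C)²/4. Then for all x, y, a, b ∈ ℝᴺ, |Q_u(x, y) − Q_u(a, b)| ≤ L·(‖a − x‖ + ‖b − y‖). In particular, for each fixed bounded continuous u, the quasipotential Q_u is Lipschitz continuous in its two endpoint arguments. -/
open MeasureTheory Set

/-- The Freidlin–Wentzell quasipotential of a vector field `u` between `x` and `y`. -/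
noncomputable def quasipotential (N : ℕ)
    (u : EuclideanSpace ℝ (Fin N) → EuclideanSpace ℝ (Fin N))
    (x y : EuclideanSpace ℝ (Fin N)) : ℝ :=
  sInf {a : ℝ | ∃ T : ℝ, 0 < T ∧ ∃ φ g : ℝ → EuclideanSpace ℝ (Fin N),
    IsAdmissiblePath N 0 T φ g ∧ φ 0 = x ∧ φ T = y ∧
    a = (1 / 4) * ∫ t in Set.Icc 0 T, ‖g t - u (φ t)‖ ^ 2}

/-!
Both inequalities hidden in the absolute value follow from
`Q(a,b) ≤ Q(x,y) + (1+C)²/4 · (‖x - a‖ + ‖b - y‖)`: an admissible path from `x` to `y` is extended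
by unit-speed straight segments `a → x` in front and `y → b` behind. Actions add under
concatenation, and along a unit-speed segment `‖φ' - u(φ)‖ ≤ 1 + C`, so a segment of length `d`
costs at most `(1+C)² d / 4`.
-/

section Concat

variable {α E : Type*} [NormedAddCommGroup E]

noncomputable def concatAt (T : ℝ) (f₁ f₂ : ℝ → α) : ℝ → α :=
  fun t => if t ≤ T then f₁ t else f₂ (t - T)

variable {T t : ℝ}

theorem concatAt_of_le (f₁ f₂ : ℝ → α) (ht : t ≤ T) : concatAt T f₁ f₂ t = f₁ t :=
  if_pos ht

theorem concatAt_of_lt (f₁ f₂ : ℝ → α) (ht : T < t) : concatAt T f₁ f₂ t = f₂ (t - T) :=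
  if_neg (not_le.2 ht)

theorem concatAt_add {f₁ f₂ : ℝ → α} (hf : f₁ T = f₂ 0) {T₂ : ℝ} (hT₂ : 0 ≤ T₂) :
    concatAt T f₁ f₂ (T + T₂) = f₂ T₂ := by
  unfold concatAt
  split_ifs with h
  · obtain rfl : T₂ = 0 := by linarith
    rw [add_zero, hf]
  · rw [add_sub_cancel_left]

theorem comp₂_concatAt {β γ : Type*} (F : α → β → γ) (f₁ f₂ : ℝ → α) (g₁ g₂ : ℝ → β) :
    (fun t => F (concatAt T f₁ f₂ t) (concatAt T g₁ g₂ t)) =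
      concatAt T (fun t => F (f₁ t) (g₁ t)) (fun t => F (f₂ t) (g₂ t)) := by
  ext t
  unfold concatAt
  split_ifs <;> rfl

theorem comp_concatAt {β : Type*} (F : α → β) (f₁ f₂ : ℝ → α) :
    (fun t => F (concatAt T f₁ f₂ t)) = concatAt T (fun t => F (f₁ t)) (fun t => F (f₂ t)) :=
  comp₂_concatAt (fun a (_ : Unit) => F a) f₁ f₂ (fun _ => ()) (fun _ => ())

theorem Measurable.concatAt [MeasurableSpace α] {f₁ f₂ : ℝ → α} (h₁ : Measurable f₁)
    (h₂ : Measurable f₂) : Measurable (concatAt T f₁ f₂) :=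
  Measurable.ite measurableSet_Iic h₁ (h₂.comp (measurable_id.sub measurable_const))

variable {f₁ f₂ : ℝ → E}

theorem IntervalIntegrable.concatAt_left (hT : 0 ≤ T) (h₁ : IntervalIntegrable f₁ volume 0 T) :
    IntervalIntegrable (concatAt T f₁ f₂) volume 0 T :=
  (intervalIntegrable_congr fun _ hs =>
    concatAt_of_le f₁ f₂ ((uIoc_of_le hT).subset hs).2).2 h₁

theorem IntervalIntegrable.concatAt_right (ht : T ≤ t)
    (h₂ : IntervalIntegrable f₂ volume 0 (t - T)) :
    IntervalIntegrable (concatAt T f₁ f₂) volume T t :=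
  (intervalIntegrable_congr fun _ hs =>
    concatAt_of_lt f₁ f₂ ((uIoc_of_le ht).subset hs).1).2 <| by
      simpa using h₂.comp_sub_right T

theorem IntervalIntegrable.concatAt (hT : 0 ≤ T) (ht : T ≤ t)
    (h₁ : IntervalIntegrable f₁ volume 0 T) (h₂ : IntervalIntegrable f₂ volume 0 (t - T)) :
    IntervalIntegrable (concatAt T f₁ f₂) volume 0 t :=
  (h₁.concatAt_left hT).trans (h₂.concatAt_right ht)

variable [NormedSpace ℝ E]

theorem integral_concatAt_of_le (ht₀ : 0 ≤ t) (ht : t ≤ T) :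
    ∫ s in 0..t, concatAt T f₁ f₂ s = ∫ s in 0..t, f₁ s :=
  intervalIntegral.integral_congr fun _ hs =>
    concatAt_of_le f₁ f₂ <| ((uIcc_of_le ht₀).subset hs).2.trans ht

theorem integral_concatAt_of_ge (hT : 0 ≤ T) (ht : T ≤ t)
    (h₁ : IntervalIntegrable f₁ volume 0 T) (h₂ : IntervalIntegrable f₂ volume 0 (t - T)) :
    ∫ s in 0..t, concatAt T f₁ f₂ s = (∫ s in 0..T, f₁ s) + ∫ s in 0..t - T, f₂ s := by
  have hright : ∫ s in T..t, concatAt T f₁ f₂ s = ∫ s in 0..t - T, f₂ s := by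
    rw [← sub_self T, ← intervalIntegral.integral_comp_sub_right]
    exact intervalIntegral.integral_congr_ae <| .of_forall fun _ hs =>
      concatAt_of_lt f₁ f₂ ((uIoc_of_le ht).subset hs).1
  rw [← intervalIntegral.integral_add_adjacent_intervals (h₁.concatAt_left hT)
    (h₂.concatAt_right ht), integral_concatAt_of_le hT le_rfl, hright]

end Concat

theorem MeasureTheory.Integrable.sq_norm_sub {α F : Type*} [MeasurableSpace α] {μ : Measure α}
    [NormedAddCommGroup F] {f g : α → F}
    (hf : AEStronglyMeasurable f μ) (hg : AEStronglyMeasurable g μ)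
    (hf2 : Integrable (fun x => ‖f x‖ ^ 2) μ) (hg2 : Integrable (fun x => ‖g x‖ ^ 2) μ) :
    Integrable (fun x => ‖f x - g x‖ ^ 2) μ :=
  (memLp_two_iff_integrable_sq_norm (hf.sub hg)).1 <|
    ((memLp_two_iff_integrable_sq_norm hf).2 hf2).sub
      ((memLp_two_iff_integrable_sq_norm hg).2 hg2)

section AdmissiblePath

variable {N : ℕ} {T : ℝ} {φ g : ℝ → EuclideanSpace ℝ (Fin N)}

theorem IsAdmissiblePath.integrableOn {A B : ℝ} (h : IsAdmissiblePath N A B φ g) :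
    IntegrableOn g (Icc A B) :=
  ((memLp_two_iff_integrable_sq_norm h.1.aestronglyMeasurable).2 h.2.1).integrable one_le_two

theorem IsAdmissiblePath.intervalIntegrable_s7 (h : IsAdmissiblePath N 0 T φ g) (hT : 0 ≤ T) :
    IntervalIntegrable g volume 0 T :=
  (intervalIntegrable_iff_integrableOn_Icc_of_le hT).2 h.integrableOn

theorem IsAdmissiblePath.intervalIntegrable_sq_norm (h : IsAdmissiblePath N 0 T φ g)
    (hT : 0 ≤ T) : IntervalIntegrable (fun t => ‖g t‖ ^ 2) volume 0 T :=
  (intervalIntegrable_iff_integrableOn_Icc_of_le hT).2 h.2.1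

theorem IsAdmissiblePath.continuousOn_s7 (h : IsAdmissiblePath N 0 T φ g) (hT : 0 ≤ T) :
    ContinuousOn φ (Icc 0 T) := by
  have hprim : ContinuousOn (fun t => φ 0 + ∫ s in 0..t, g s) (Icc 0 T) := by
    refine continuousOn_const.add ?_
    have hcont := intervalIntegral.continuousOn_primitive_interval
      (a := 0) (b := T) (by rw [uIcc_of_le hT]; exact h.integrableOn)
    rwa [uIcc_of_le hT] at hcont
  exact hprim.congr h.2.2

theorem IsAdmissiblePath.intervalIntegrable_action
    {u : EuclideanSpace ℝ (Fin N) → EuclideanSpace ℝ (Fin N)} (hu : Continuous u)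
    (h : IsAdmissiblePath N 0 T φ g) (hT : 0 ≤ T) :
    IntervalIntegrable (fun t => ‖g t - u (φ t)‖ ^ 2) volume 0 T := by
  have huφ : ContinuousOn (fun t => u (φ t)) (Icc 0 T) :=
    hu.comp_continuousOn (h.continuousOn_s7 hT)
  rw [intervalIntegrable_iff_integrableOn_Icc_of_le hT]
  exact Integrable.sq_norm_sub h.1.aestronglyMeasurable
    (huφ.aestronglyMeasurable measurableSet_Icc) h.2.1 (huφ.norm.pow 2).integrableOn_Icc

theorem isAdmissiblePath_affine (x v : EuclideanSpace ℝ (Fin N)) (T : ℝ) :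
    IsAdmissiblePath N 0 T (fun t => x + t • v) (fun _ => v) :=
  ⟨measurable_const, integrableOn_const measure_Icc_lt_top.ne, fun t _ => by simp⟩

end AdmissiblePath

section PathAction

variable {E : Type*} [NormedAddCommGroup E] {u : E → E} {T : ℝ}

noncomputable def pathAction (u : E → E) (T : ℝ) (φ g : ℝ → E) : ℝ :=
  (1 / 4) * ∫ t in 0..T, ‖g t - u (φ t)‖ ^ 2

theorem pathAction_eq_setIntegral (hT : 0 ≤ T) (φ g : ℝ → E) :
    pathAction u T φ g = (1 / 4) * ∫ t in Icc 0 T, ‖g t - u (φ t)‖ ^ 2 := by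
  rw [pathAction, intervalIntegral.integral_of_le hT, integral_Icc_eq_integral_Ioc]

theorem pathAction_le_of_norm_le {K : ℝ} (hT : 0 ≤ T) {φ g : ℝ → E}
    (hK : ∀ t, ‖g t - u (φ t)‖ ≤ K) : pathAction u T φ g ≤ K ^ 2 / 4 * T := by
  have hint : ‖∫ t in 0..T, ‖g t - u (φ t)‖ ^ 2‖ ≤ K ^ 2 * |T - 0| :=
    intervalIntegral.norm_integral_le_of_norm_le_const fun t _ => by
      rw [norm_pow, norm_norm]
      exact pow_le_pow_left₀ (norm_nonneg _) (hK t) 2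
  rw [sub_zero, abs_of_nonneg hT] at hint
  rw [pathAction]
  linarith [Real.le_norm_self (∫ t in 0..T, ‖g t - u (φ t)‖ ^ 2)]

end PathAction

section Concatenation

variable {N : ℕ} {T₁ T₂ : ℝ} {φ₁ φ₂ g₁ g₂ : ℝ → EuclideanSpace ℝ (Fin N)}

theorem IsAdmissiblePath.concatAt (h₁ : IsAdmissiblePath N 0 T₁ φ₁ g₁)
    (h₂ : IsAdmissiblePath N 0 T₂ φ₂ g₂) (hT₁ : 0 ≤ T₁) (hT₂ : 0 ≤ T₂) (hφ : φ₁ T₁ = φ₂ 0) :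
    IsAdmissiblePath N 0 (T₁ + T₂) (concatAt T₁ φ₁ φ₂) (concatAt T₁ g₁ g₂) := by
  refine ⟨h₁.1.concatAt h₂.1, ?_, fun t ht => ?_⟩
  · rw [← intervalIntegrable_iff_integrableOn_Icc_of_le (add_nonneg hT₁ hT₂),
      comp_concatAt fun v => ‖v‖ ^ 2]
    refine (h₁.intervalIntegrable_sq_norm hT₁).concatAt hT₁ (le_add_of_nonneg_right hT₂) ?_
    rw [add_sub_cancel_left]
    exact h₂.intervalIntegrable_sq_norm hT₂
  have h0 := concatAt_of_le φ₁ φ₂ hT₁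
  rcases le_or_gt t T₁ with htT | htT
  · rw [concatAt_of_le φ₁ φ₂ htT, h0, integral_concatAt_of_le ht.1 htT,
      h₁.2.2 t ⟨ht.1, htT⟩]
  · have hs : t - T₁ ∈ Icc 0 T₂ := ⟨by linarith, by linarith [ht.2]⟩
    have hg₂ : IntervalIntegrable g₂ volume 0 (t - T₁) :=
      (h₂.intervalIntegrable_s7 hT₂).mono_set <| by
        rw [uIcc_of_le hs.1, uIcc_of_le hT₂]
        exact Icc_subset_Icc_right hs.2
    rw [concatAt_of_lt φ₁ φ₂ htT, h0,
      integral_concatAt_of_ge hT₁ htT.le (h₁.intervalIntegrable_s7 hT₁) hg₂, h₂.2.2 _ hs, ← hφ,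
      h₁.2.2 T₁ ⟨hT₁, le_rfl⟩, add_assoc]

theorem pathAction_concatAt {u : EuclideanSpace ℝ (Fin N) → EuclideanSpace ℝ (Fin N)}
    (hu : Continuous u) (h₁ : IsAdmissiblePath N 0 T₁ φ₁ g₁)
    (h₂ : IsAdmissiblePath N 0 T₂ φ₂ g₂) (hT₁ : 0 ≤ T₁) (hT₂ : 0 ≤ T₂) :
    pathAction u (T₁ + T₂) (concatAt T₁ φ₁ φ₂) (concatAt T₁ g₁ g₂) =
      pathAction u T₁ φ₁ g₁ + pathAction u T₂ φ₂ g₂ := by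
  have h₂' : IntervalIntegrable (fun t => ‖g₂ t - u (φ₂ t)‖ ^ 2) volume 0 (T₁ + T₂ - T₁) := by
    rw [add_sub_cancel_left]
    exact h₂.intervalIntegrable_action hu hT₂
  rw [pathAction, comp₂_concatAt fun v w => ‖v - u w‖ ^ 2,
    integral_concatAt_of_ge hT₁ (le_add_of_nonneg_right hT₂)
      (h₁.intervalIntegrable_action hu hT₁) h₂', add_sub_cancel_left, mul_add]
  rfl

end Concatenation

section UnitDirection

variable {E : Type*} [NormedAddCommGroup E] [NormedSpace ℝ E] (x y : E)

/-- This is `0` when `x = y`, since `‖0‖⁻¹ = 0`. -/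
noncomputable def unitDirection : E := ‖y - x‖⁻¹ • (y - x)

theorem norm_unitDirection_le : ‖unitDirection x y‖ ≤ 1 := by
  rw [unitDirection, norm_smul, norm_inv, norm_norm]
  exact inv_mul_le_one_of_le₀ le_rfl (norm_nonneg _)

theorem norm_smul_unitDirection : ‖y - x‖ • unitDirection x y = y - x := by
  rcases eq_or_ne (y - x) 0 with h | h
  · simp [unitDirection, h]
  · rw [unitDirection, smul_smul, mul_inv_cancel₀ (norm_ne_zero_iff.2 h), one_smul]

end UnitDirection

section Quasipotential

variable {N : ℕ} {u : EuclideanSpace ℝ (Fin N) → EuclideanSpace ℝ (Fin N)}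
  {T : ℝ} {φ g : ℝ → EuclideanSpace ℝ (Fin N)} {x y z : EuclideanSpace ℝ (Fin N)}

def IsAdmissiblePathBetween (N : ℕ) (T : ℝ) (φ g : ℝ → EuclideanSpace ℝ (Fin N))
    (x y : EuclideanSpace ℝ (Fin N)) : Prop :=
  IsAdmissiblePath N 0 T φ g ∧ φ 0 = x ∧ φ T = y

theorem IsAdmissiblePathBetween.concatAt {T₁ T₂ : ℝ}
    {φ₁ φ₂ g₁ g₂ : ℝ → EuclideanSpace ℝ (Fin N)}
    (h₁ : IsAdmissiblePathBetween N T₁ φ₁ g₁ x y) (h₂ : IsAdmissiblePathBetween N T₂ φ₂ g₂ y z)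
    (hT₁ : 0 ≤ T₁) (hT₂ : 0 ≤ T₂) :
    IsAdmissiblePathBetween N (T₁ + T₂) (concatAt T₁ φ₁ φ₂) (concatAt T₁ g₁ g₂) x z := by
  have hφ : φ₁ T₁ = φ₂ 0 := h₁.2.2.trans h₂.2.1.symm
  exact ⟨h₁.1.concatAt h₂.1 hT₁ hT₂ hφ, (concatAt_of_le φ₁ φ₂ hT₁).trans h₁.2.1,
    (concatAt_add hφ hT₂).trans h₂.2.2⟩

theorem isAdmissiblePathBetween_segment (x y : EuclideanSpace ℝ (Fin N)) :
    IsAdmissiblePathBetween N ‖y - x‖ (fun t => x + t • unitDirection x y)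
      (fun _ => unitDirection x y) x y :=
  ⟨isAdmissiblePath_affine x _ _, by simp, by simp [norm_smul_unitDirection]⟩

theorem pathAction_segment_le {C : ℝ} (hbound : ∀ z, ‖u z‖ ≤ C)
    (x y : EuclideanSpace ℝ (Fin N)) :
    pathAction u ‖y - x‖ (fun t => x + t • unitDirection x y) (fun _ => unitDirection x y) ≤
      (1 + C) ^ 2 / 4 * ‖y - x‖ :=
  pathAction_le_of_norm_le (norm_nonneg _) fun _ =>
    (norm_sub_le _ _).trans (add_le_add (norm_unitDirection_le x y) (hbound _))

theorem quasipotential_le_pathAction (hT : 0 < T) (h : IsAdmissiblePathBetween N T φ g x y) :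
    quasipotential N u x y ≤ pathAction u T φ g := by
  refine csInf_le ⟨0, ?_⟩ ⟨T, hT, φ, g, h.1, h.2.1, h.2.2, pathAction_eq_setIntegral hT.le φ g⟩
  rintro _ ⟨T, -, φ, g, -, -, -, rfl⟩
  positivity

theorem exists_pathAction_lt_quasipotential_add
    (u : EuclideanSpace ℝ (Fin N) → EuclideanSpace ℝ (Fin N)) (x y : EuclideanSpace ℝ (Fin N))
    {ε : ℝ} (hε : 0 < ε) :
    ∃ T, 0 < T ∧ ∃ φ g, IsAdmissiblePathBetween N T φ g x y ∧
      pathAction u T φ g < quasipotential N u x y + ε := by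
  by_contra! hge
  have hle : quasipotential N u x y + ε ≤ quasipotential N u x y := by
    refine le_csInf
      ⟨_, 1, one_pos, _, _, isAdmissiblePath_affine x (y - x) 1, by simp, by simp, rfl⟩ ?_
    rintro _ ⟨T, hT, φ, g, hadm, hx, hy, rfl⟩
    rw [← pathAction_eq_setIntegral hT.le]
    exact hge T hT φ g ⟨hadm, hx, hy⟩
  linarith

theorem quasipotential_le_add {C : ℝ} (hu : Continuous u) (hbound : ∀ z, ‖u z‖ ≤ C)
    (x y a b : EuclideanSpace ℝ (Fin N)) :
    quasipotential N u a b ≤ quasipotential N u x y + (1 + C) ^ 2 / 4 * (‖x - a‖ + ‖b - y‖) := by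
  refine le_of_forall_pos_lt_add fun ε hε => ?_
  obtain ⟨T, hT, φ, g, hφ, hlt⟩ := exists_pathAction_lt_quasipotential_add u x y hε
  have hin := isAdmissiblePathBetween_segment a x
  have hout := isAdmissiblePathBetween_segment y b
  have hmid := hφ.concatAt hout hT.le (norm_nonneg _)
  calc quasipotential N u a b
      ≤ pathAction u (‖x - a‖ + (T + ‖b - y‖)) _ _ :=
        quasipotential_le_pathAction (by positivity)
          (hin.concatAt hmid (norm_nonneg _) (by positivity))
    _ = _ + (pathAction u T φ g + _) := by
        rw [pathAction_concatAt hu hin.1 hmid.1 (norm_nonneg _) (by positivity),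
          pathAction_concatAt hu hφ.1 hout.1 hT.le (norm_nonneg _)]
    _ < quasipotential N u x y + (1 + C) ^ 2 / 4 * (‖x - a‖ + ‖b - y‖) + ε := by
        linarith [pathAction_segment_le hbound a x, pathAction_segment_le hbound y b]

end Quasipotential

theorem quasipotential_lipschitz_general (N : ℕ) (C : ℝ)
    (u : EuclideanSpace ℝ (Fin N) → EuclideanSpace ℝ (Fin N)) (hu : Continuous u)
    (hbound : ∀ z, ‖u z‖ ≤ C) :
    ∀ x y a b : EuclideanSpace ℝ (Fin N),
      |quasipotential N u x y - quasipotential N u a b| ≤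
        (1 + C) ^ 2 / 4 * (‖a - x‖ + ‖b - y‖) := by
  intro x y a b
  have h₁ := quasipotential_le_add hu hbound x y a b
  have h₂ := quasipotential_le_add hu hbound a b x y
  rw [norm_sub_rev x a] at h₁
  rw [norm_sub_rev y b] at h₂
  rw [abs_sub_le_iff]
  constructor <;> linarith

/-- For a bounded continuous vector field `u` with `‖u‖ ≤ C`, the
quasipotential is Lipschitz in its two endpoint arguments with constant `L = (1+C)²/4`:
`|Q_u(x,y) − Q_u(a,b)| ≤ L·(‖a − x‖ + ‖b − y‖)`. -/
theorem quasipotential_lipschitz (N : ℕ) (hN : 1 ≤ N) (C : ℝ) (hC : 0 ≤ C)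
    (u : EuclideanSpace ℝ (Fin N) → EuclideanSpace ℝ (Fin N)) (hu : Continuous u)
    (hbound : ∀ z, ‖u z‖ ≤ C) :
    ∀ x y a b : EuclideanSpace ℝ (Fin N),
      |quasipotential N u x y - quasipotential N u a b| ≤
        (1 + C) ^ 2 / 4 * (‖a - x‖ + ‖b - y‖) :=
  quasipotential_lipschitz_general N C u hu hbound
end

section
/- Consider a finite directed multigraph with reversals (V, E, s, t, rev), with V nonempty, admitting at least one rooted spanning tree, and let g : E → ℝ satisfy g(e) > 0 for every edge e. Let T_* be a rooted spanning tree with root v_* minimizing the total gain Σ_{e∈T} g(e) among all rooted spanning trees (over all possible roots). Let h : V → ℝ be a height function for T_*, i.e. h(v_*) = 0 and h(s(e)) = h(t(e)) + g(rev(e)) − g(e) for every edge e ∈ T_*. Then h(v) ≥ 0 for every vertex v ∈ V, and h(s(e)) + g(e) > 0 for every edge e ∈ E. (This is the paper's lemma that the Morse-graph heights of vertices are nonnegative and the heights h(e) := h(s(e)) + g(e) of directed edges are strictly positive.) -/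
/-- `T` is a rooted spanning tree with root `r` in the directed multigraph with source map
`s` and target map `t`: no edge of `T` has source `r`, every vertex `w ≠ r` is the source of
exactly one edge of `T`, and from every vertex one can reach `r` along edges of `T`. -/
def IsRootedSpanningTree {V E : Type*} (s t : E → V) (T : Finset E) (r : V) : Prop :=
  (∀ e ∈ T, s e ≠ r) ∧
  (∀ w : V, w ≠ r → ∃! e, e ∈ T ∧ s e = w) ∧
  (∀ w : V, Relation.ReflTransGen (fun a b => ∃ e ∈ T, s e = a ∧ t e = b) w r)

/-- In a finite directed multigraph with reversals carrying strictly
positive gains `g`, if `T₀` (rooted at `v₀`) minimizes the total gain among all rooted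
spanning trees and `h` is a height function for `T₀` (`h v₀ = 0`,
`h(s e) = h(t e) + g(rev e) − g(e)` on `T₀`), then all vertex heights are nonnegative and
all edge heights `h(s e) + g e` are strictly positive. -/
theorem heights_nonneg_and_edge_heights_pos
    {V E : Type*} [Fintype V] [Fintype E] [Nonempty V]
    (s t : E → V) (rev : E → E)
    (hrevrev : ∀ e, rev (rev e) = e)
    (hsrev : ∀ e, s (rev e) = t e)
    (htrev : ∀ e, t (rev e) = s e)
    (g : E → ℝ) (hg : ∀ e, 0 < g e)
    (hex : ∃ (T : Finset E) (r : V), IsRootedSpanningTree s t T r)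
    (T₀ : Finset E) (v₀ : V) (hT₀ : IsRootedSpanningTree s t T₀ v₀)
    (hmin : ∀ (T : Finset E) (r : V), IsRootedSpanningTree s t T r →
      ∑ e ∈ T₀, g e ≤ ∑ e ∈ T, g e)
    (h : V → ℝ) (hroot : h v₀ = 0)
    (hrec : ∀ e ∈ T₀, h (s e) = h (t e) + g (rev e) - g e) :
    (∀ v : V, 0 ≤ h v) ∧ (∀ e : E, 0 < h (s e) + g e) := by
  classical
  have key : ∀ v : V, 0 ≤ h v := by
    by_contra hcon
    push_neg at hcon
    obtain ⟨v, hv⟩ := hcon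
    have hvne : v ≠ v₀ := fun hh => by rw [hh, hroot] at hv; exact lt_irrefl 0 hv
    obtain ⟨hT1, hT2, hT3⟩ := hT₀
    obtain ⟨e₀, -, -⟩ := hT2 v hvne
    haveI : Nonempty E := ⟨e₀⟩
    -- the unique out-edge of a non-root vertex
    set F : V → E := fun u => if hu : u = v₀ then Classical.arbitrary E
      else (hT2 u hu).choose with hFdef
    have hFmem : ∀ u, u ≠ v₀ → F u ∈ T₀ ∧ s (F u) = u := by
      intro u hu
      simp only [hFdef, dif_neg hu]
      exact (hT2 u hu).choose_spec.1
    have hFuniq : ∀ u, u ≠ v₀ → ∀ e, e ∈ T₀ → s e = u → e = F u := by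
      intro u hu e he hse
      simp only [hFdef, dif_neg hu]
      exact (hT2 u hu).choose_spec.2 e ⟨he, hse⟩
    -- the successor map along the tree
    set σ : V → V := fun u => if u = v₀ then v₀ else t (F u) with hσdef
    have hσ : ∀ u, u ≠ v₀ → σ u = t (F u) := fun u hu => by simp [hσdef, hu]
    -- iterates reach the root
    have hreach : ∀ u : V, ∃ k, σ^[k] u = v₀ := by
      intro u
      have hR := hT3 u
      induction hR using Relation.ReflTransGen.head_induction_on with
      | refl => exact ⟨0, rfl⟩
      | @head a c hab hcb ih =>
        obtain ⟨e, heT, hse, hte⟩ := hab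
        obtain ⟨k, hk⟩ := ih
        have ha : a ≠ v₀ := hse ▸ hT1 e heT
        have hσa : σ a = c := by rw [hσ a ha, ← hFuniq a ha e heT hse, hte]
        exact ⟨k + 1, by rw [Function.iterate_succ_apply, hσa, hk]⟩
    set n : ℕ := Nat.find (hreach v) with hndef
    set w : ℕ → V := fun i => σ^[i] v with hwdef
    have hwn : w n = v₀ := Nat.find_spec (hreach v)
    have hwlt : ∀ i < n, w i ≠ v₀ := fun i hi => Nat.find_min (hreach v) hi
    have hw0 : w 0 = v := rfl
    have hnpos : 0 < n := by
      rcases Nat.eq_zero_or_pos n with h0 | h0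
      · exact absurd (by rw [h0] at hwn; exact hwn) hvne
      · exact h0
    -- step structure
    have hwsucc : ∀ i, w (i + 1) = σ (w i) := fun i => Function.iterate_succ_apply' σ i v
    have hstep : ∀ i < n, F (w i) ∈ T₀ ∧ s (F (w i)) = w i ∧ t (F (w i)) = w (i + 1) := by
      intro i hi
      obtain ⟨hm, hs⟩ := hFmem (w i) (hwlt i hi)
      exact ⟨hm, hs, by rw [hwsucc i, hσ (w i) (hwlt i hi)]⟩
    -- injectivity of the path vertices
    have hwinj : ∀ i ≤ n, ∀ j ≤ n, w i = w j → i = j := by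
      have aux : ∀ i j, i < j → j ≤ n → w i ≠ w j := by
        intro i j hij hjn heq
        have h1 : σ^[n - j] (w j) = v₀ := by
          show σ^[n - j] (σ^[j] v) = v₀
          rw [← Function.iterate_add_apply, Nat.sub_add_cancel hjn]
          exact hwn
        have h2 : σ^[(n - j) + i] v = v₀ := by
          rw [Function.iterate_add_apply]
          show σ^[n - j] (w i) = v₀
          rw [heq]
          exact h1
        have hlt : (n - j) + i < n := by omega
        exact Nat.find_min (hreach v) hlt h2
      intro i hi j hj heq
      rcases lt_trichotomy i j with hlt | he | hlt
      · exact absurd heq (aux i j hlt hj)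
      · exact he
      · exact absurd heq.symm (aux j i hlt hi)
    -- telescoping sum
    have htele : ∑ i ∈ Finset.range n, (g (rev (F (w i))) - g (F (w i))) = h v := by
      have := Finset.sum_range_sub' (fun i => h (w i)) n
      calc ∑ i ∈ Finset.range n, (g (rev (F (w i))) - g (F (w i)))
          = ∑ i ∈ Finset.range n, (h (w i) - h (w (i + 1))) := by
            apply Finset.sum_congr rfl
            intro i hi
            rw [Finset.mem_range] at hi
            obtain ⟨hm, hs, ht⟩ := hstep i hi
            have := hrec _ hm
            rw [hs, ht] at this
            linarith
        _ = h (w 0) - h (w n) := Finset.sum_range_sub' (fun i => h (w i)) n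
        _ = h v := by rw [hw0, hwn, hroot]; ring
    -- the path edges
    set P : Finset E := (Finset.range n).image (fun i => F (w i)) with hPdef
    have hPinj : ∀ i ∈ Finset.range n, ∀ j ∈ Finset.range n,
        F (w i) = F (w j) → i = j := by
      intro i hi j hj heq
      rw [Finset.mem_range] at hi hj
      have h1 := (hstep i hi).2.1
      have h2 := (hstep j hj).2.1
      exact hwinj i hi.le j hj.le (by rw [← h1, ← h2, heq])
    have hPsub : P ⊆ T₀ := by
      intro e he
      rw [hPdef, Finset.mem_image] at he
      obtain ⟨i, hi, rfl⟩ := he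
      exact (hstep i (Finset.mem_range.mp hi)).1
    have hPmem : ∀ e, e ∈ P ↔ ∃ i < n, F (w i) = e := by
      intro e; simp [hPdef, Finset.mem_image]
    -- the modified tree
    set T' : Finset E := (T₀ \ P) ∪ P.image rev with hT'def
    have hT'mem : ∀ e, e ∈ T' ↔ (e ∈ T₀ ∧ e ∉ P) ∨ ∃ i < n, rev (F (w i)) = e := by
      intro e
      simp only [hT'def, Finset.mem_union, Finset.mem_sdiff, Finset.mem_image]
      constructor
      · rintro (⟨h1, h2⟩ | ⟨a, ha, rfl⟩)
        · exact Or.inl ⟨h1, h2⟩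
        · obtain ⟨i, hi, rfl⟩ := (hPmem a).mp ha
          exact Or.inr ⟨i, hi, rfl⟩
      · rintro (⟨h1, h2⟩ | ⟨i, hi, rfl⟩)
        · exact Or.inl ⟨h1, h2⟩
        · exact Or.inr ⟨F (w i), (hPmem _).mpr ⟨i, hi, rfl⟩, rfl⟩
    -- sources of the reversed path edges
    have hrevsrc : ∀ i < n, s (rev (F (w i))) = w (i + 1) := by
      intro i hi
      rw [hsrev, (hstep i hi).2.2]
    -- T' is a rooted spanning tree with root v
    have hTree : IsRootedSpanningTree s t T' v := by
      refine ⟨?_, ?_, ?_⟩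
      · -- no edge with source v
        intro e he hse
        rw [hT'mem] at he
        rcases he with ⟨h1, h2⟩ | ⟨i, hi, rfl⟩
        · exact h2 ((hPmem e).mpr ⟨0, hnpos, (hFuniq v hvne e h1 (hse)).symm⟩)
        · have : i + 1 = 0 := hwinj (i + 1) hi (0) (Nat.zero_le n) (by rw [hrevsrc i hi] at hse; rw [hse, hw0])
          omega
      · -- unique out-edge for every vertex ≠ v
        intro u hu
        by_cases hpath : ∃ j ≤ n, w j = u
        · obtain ⟨j, hjn, rfl⟩ := hpath
          have hj0 : j ≠ 0 := fun hh => hu (by rw [hh, hw0])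
          obtain ⟨i, rfl⟩ : ∃ i, j = i + 1 := ⟨j - 1, by omega⟩
          have hin : i < n := by omega
          refine ⟨rev (F (w i)), ⟨(hT'mem _).mpr (Or.inr ⟨i, hin, rfl⟩), hrevsrc i hin⟩, ?_⟩
          rintro e ⟨he, hse⟩
          rw [hT'mem] at he
          rcases he with ⟨h1, h2⟩ | ⟨i', hi', rfl⟩
          · -- a T₀ edge with source w (i+1): impossible
            by_cases hin' : i + 1 < n
            · exact absurd ((hPmem e).mpr ⟨i + 1, hin', (hFuniq _ (hwlt _ hin') e h1 hse).symm⟩) h2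
            · exfalso
              have hin2 : i + 1 = n := by omega
              exact hT1 e h1 (by rw [hse, hin2, hwn])
          · have : i' + 1 = i + 1 := hwinj (i' + 1) hi' (i + 1) hjn (by rw [← hrevsrc i' hi', hse])
            rw [Nat.succ_injective this]
        · push_neg at hpath
          have hune : u ≠ v₀ := fun hh => hpath n le_rfl (hh ▸ hwn)
          obtain ⟨hm, hs⟩ := hFmem u hune
          have hFP : F u ∉ P := by
            intro hFP
            obtain ⟨i, hi, heq⟩ := (hPmem _).mp hFP
            have := (hstep i hi).2.1
            rw [heq, hs] at this
            exact hpath i hi.le this.symm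
          refine ⟨F u, ⟨(hT'mem _).mpr (Or.inl ⟨hm, hFP⟩), hs⟩, ?_⟩
          rintro e ⟨he, hse⟩
          rw [hT'mem] at he
          rcases he with ⟨h1, h2⟩ | ⟨i, hi, rfl⟩
          · exact hFuniq u hune e h1 hse
          · exact absurd ((hrevsrc i hi) ▸ hse : w (i+1) = u) (hpath (i + 1) hi)
      · -- reachability to v
        set rel' : V → V → Prop := fun a b => ∃ e ∈ T', s e = a ∧ t e = b with hrel'
        have hback : ∀ j ≤ n, Relation.ReflTransGen rel' (w j) v := by
          intro j
          induction j with
          | zero => intro _; rw [hw0]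
          | succ i ih =>
            intro hjn
            have hin : i < n := by omega
            refine Relation.ReflTransGen.head ?_ (ih (by omega))
            exact ⟨rev (F (w i)), (hT'mem _).mpr (Or.inr ⟨i, hin, rfl⟩), hrevsrc i hin,
              by rw [htrev, (hstep i hin).2.1]⟩
        intro u
        have hR := hT3 u
        induction hR using Relation.ReflTransGen.head_induction_on with
        | refl => exact hwn ▸ hback n le_rfl
        | @head a c hab hcb ih =>
          obtain ⟨e, heT, hse, hte⟩ := hab
          by_cases heP : e ∈ P
          · obtain ⟨i, hi, rfl⟩ := (hPmem e).mp heP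
            have : w i = a := by rw [← (hstep i hi).2.1, hse]
            exact this ▸ hback i hi.le
          · exact Relation.ReflTransGen.head ⟨e, (hT'mem e).mpr (Or.inl ⟨heT, heP⟩), hse, hte⟩ ih
    -- the sum comparison
    have hrevinj : Function.Injective rev := Function.LeftInverse.injective hrevrev
    have hsumP' : ∑ e ∈ P, g (rev e) = ∑ i ∈ Finset.range n, g (rev (F (w i))) := by
      rw [hPdef, Finset.sum_image (fun i hi j hj hij => hPinj i hi j hj hij)]
    have hsumPg : ∑ e ∈ P, g e = ∑ i ∈ Finset.range n, g (F (w i)) := by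
      rw [hPdef, Finset.sum_image (fun i hi j hj hij => hPinj i hi j hj hij)]
    have hsdiff : ∑ e ∈ T₀ \ P, g e = ∑ e ∈ T₀, g e - ∑ e ∈ P, g e :=
      Finset.sum_sdiff_eq_sub hPsub
    have himg : ∑ e ∈ P.image rev, g e = ∑ e ∈ P, g (rev e) :=
      Finset.sum_image (fun a _ b _ hab => hrevinj hab)
    have hinter : 0 ≤ ∑ e ∈ (T₀ \ P) ∩ P.image rev, g e :=
      Finset.sum_nonneg (fun e _ => (hg e).le)
    have hunion := Finset.sum_union_inter (s₁ := T₀ \ P) (s₂ := P.image rev) (f := g)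
    have hT'sum : ∑ e ∈ T', g e < ∑ e ∈ T₀, g e := by
      have hd : ∑ i ∈ Finset.range n, g (rev (F (w i))) - ∑ i ∈ Finset.range n, g (F (w i))
          = h v := by rw [← Finset.sum_sub_distrib, htele]
      have : ∑ e ∈ T', g e ≤ ∑ e ∈ T₀ \ P, g e + ∑ e ∈ P.image rev, g e := by
        rw [hT'def]; linarith [hunion, hinter]
      rw [hsdiff, himg, hsumP', hsumPg] at this
      linarith
    exact absurd (hmin T' v hTree) (not_le.mpr hT'sum)
  exact ⟨key, fun e => by have := key (s e); have := hg e; linarith⟩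
end
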